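/- Let φ: ℝ → ℝ satisfy the extended envelope property: there exist c₁, c₂ ≥ 0 and d₁, d₂ > 0 with |φ(u)| ≥ c₁ + d₁|u| for all u ≥ 0 (or for all u ≤ 0), and |φ(u)| ≤ c₂ + d₂|u| for all u ∈ ℝ. Then for any symmetric random variable X (i.e., X and −X have the same distribution) with all finite moments, there exist constants d, D > 0 such that d ≤ ‖φ(X)‖_k / ‖X‖_k ≤ D for all k ≥ 1. -/

import Mathlib

/-!
Upper bound: Minkowski gives `‖φ(X)‖_k ≤ c₂ + d₂ ‖X‖_k`, and `‖X‖₁ ≤ ‖X‖_k` on a probability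
space absorbs the constant `c₂` into the factor of `‖X‖_k`.

Lower bound: write `X = X⁺ - X⁻`. Symmetry makes `X⁺` and `X⁻` equidistributed, so Minkowski
gives `‖X‖_k ≤ 2 ‖X⁺‖_k`, while `d₁ X⁺ ≤ |φ(X)|` pointwise when the envelope holds on `u ≥ 0`.
The case `u ≤ 0` reduces to this one by replacing `X` with `-X`.
-/

open MeasureTheory ProbabilityTheory Real
open scoped ENNReal

/-- `k`-th moment norm of a real random variable. -/
noncomputable def mnorm {Ω : Type*} [MeasurableSpace Ω] (μ : Measure Ω) (X : Ω → ℝ)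
    (k : ℕ) : ℝ :=
  (∫ ω, |X ω| ^ k ∂μ) ^ ((k : ℝ)⁻¹)

section eLpNorm

variable {Ω : Type*} [MeasurableSpace Ω] {μ : Measure Ω} {X Y : Ω → ℝ} {p : ℝ≥0∞}

theorem MeasureTheory.MemLp.of_abs_le_add_mul [IsFiniteMeasure μ] {c d : ℝ} (hX : MemLp X p μ)
    (hY : AEStronglyMeasurable Y μ) (h : ∀ ω, |Y ω| ≤ c + d * |X ω|) : MemLp Y p μ :=
  ((memLp_const c).add (hX.norm.const_mul d)).of_le hY <| ae_of_all _ fun ω =>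
    (h ω).trans (le_abs_self _)

theorem eLpNorm_le_add_mul_eLpNorm_of_abs_le [IsProbabilityMeasure μ] {c d : ℝ}
    (hc : 0 ≤ c) (hd : 0 ≤ d) (hX : AEStronglyMeasurable X μ) (hp : 1 ≤ p)
    (hY : ∀ ω, |Y ω| ≤ c + d * |X ω|) :
    eLpNorm Y p μ ≤ ENNReal.ofReal c + ENNReal.ofReal d * eLpNorm X p μ :=
  calc eLpNorm Y p μ ≤ eLpNorm (fun ω => c + d * |X ω|) p μ :=
        eLpNorm_mono_real hY
    _ ≤ eLpNorm (fun _ => c) p μ + eLpNorm (fun ω => d * |X ω|) p μ :=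
        eLpNorm_add_le aestronglyMeasurable_const (hX.norm.const_mul d) hp
    _ = ENNReal.ofReal c + ENNReal.ofReal d * eLpNorm X p μ := by
        rw [eLpNorm_const _ (by positivity) (NeZero.ne μ), measure_univ, ENNReal.one_rpow, mul_one,
          ← eLpNorm_norm X, ← Real.enorm_eq_ofReal hc, ← Real.enorm_eq_ofReal hd,
          ← eLpNorm_const_smul]
        rfl

theorem eLpNorm_le_two_mul_eLpNorm_posPart (hX : AEMeasurable X μ)
    (hsym : μ.map X = μ.map (fun ω => -X ω)) (hp : 1 ≤ p) :
    eLpNorm X p μ ≤ 2 * eLpNorm (fun ω => (X ω)⁺) p μ := by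
  have hneg : eLpNorm (fun ω => (X ω)⁻) p μ = eLpNorm (fun ω => (X ω)⁺) p μ := by
    have h := congrArg (fun ν => eLpNorm (fun x : ℝ => x⁺) p ν) hsym
    rw [eLpNorm_map_measure, eLpNorm_map_measure] at h
    · exact h.symm
    all_goals fun_prop
  calc eLpNorm X p μ = eLpNorm (fun ω => (X ω)⁺ - (X ω)⁻) p μ := by
        simp only [posPart_sub_negPart]
    _ ≤ eLpNorm (fun ω => (X ω)⁺) p μ + eLpNorm (fun ω => (X ω)⁻) p μ :=
        eLpNorm_sub_le (by fun_prop) (by fun_prop) hp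
    _ = 2 * eLpNorm (fun ω => (X ω)⁺) p μ := by rw [hneg, two_mul]

theorem ofReal_half_mul_eLpNorm_le_of_nonneg {d : ℝ} (hd : 0 ≤ d) (hX : AEMeasurable X μ)
    (hsym : μ.map X = μ.map (fun ω => -X ω)) (hp : 1 ≤ p)
    (hY : ∀ ω, 0 ≤ X ω → d * |X ω| ≤ |Y ω|) :
    ENNReal.ofReal (d / 2) * eLpNorm X p μ ≤ eLpNorm Y p μ := by
  have hpos : ∀ ω, d * (X ω)⁺ ≤ |Y ω| := fun ω => by
    rcases le_total 0 (X ω) with h | h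
    · simpa [posPart_of_nonneg h, abs_of_nonneg h] using hY ω h
    · simp [posPart_of_nonpos h]
  calc ENNReal.ofReal (d / 2) * eLpNorm X p μ
      ≤ ENNReal.ofReal (d / 2) * (2 * eLpNorm (fun ω => (X ω)⁺) p μ) := by
        gcongr; exact eLpNorm_le_two_mul_eLpNorm_posPart hX hsym hp
    _ = eLpNorm (fun ω => d * (X ω)⁺) p μ := by
        rw [← mul_assoc, ← ENNReal.ofReal_ofNat 2, ← ENNReal.ofReal_mul (by positivity),
          div_mul_cancel₀ d two_ne_zero, ← Real.enorm_eq_ofReal hd, ← eLpNorm_const_smul]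
        rfl
    _ ≤ eLpNorm Y p μ := eLpNorm_mono fun ω => by
        rw [Real.norm_eq_abs, Real.norm_eq_abs, abs_of_nonneg (by positivity)]
        exact hpos ω

theorem ofReal_half_mul_eLpNorm_le_of_nonpos {d : ℝ} (hd : 0 ≤ d) (hX : AEMeasurable X μ)
    (hsym : μ.map X = μ.map (fun ω => -X ω)) (hp : 1 ≤ p)
    (hY : ∀ ω, X ω ≤ 0 → d * |X ω| ≤ |Y ω|) :
    ENNReal.ofReal (d / 2) * eLpNorm X p μ ≤ eLpNorm Y p μ := by
  have h := ofReal_half_mul_eLpNorm_le_of_nonneg (X := fun ω => -X ω) hd hX.neg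
    (by simpa using hsym.symm) hp
    (fun ω hω => by simpa using hY ω (neg_nonneg.1 hω))
  simpa [← Pi.neg_def, eLpNorm_neg] using h

end eLpNorm

section mnorm

variable {Ω : Type*} [MeasurableSpace Ω] {μ : Measure Ω} {X Y : Ω → ℝ} {k : ℕ}

theorem memLp_of_integrable_abs_pow (hX : AEStronglyMeasurable X μ) (hk : k ≠ 0)
    (h : Integrable (fun ω => |X ω| ^ k) μ) : MemLp X k μ :=
  (integrable_norm_rpow_iff hX (by simpa using hk) (ENNReal.natCast_ne_top k)).1 (by simpa using h)

theorem mnorm_eq_toReal_eLpNorm (hk : k ≠ 0) (hX : MemLp X k μ) :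
    mnorm μ X k = (eLpNorm X k μ).toReal := by
  rw [hX.eLpNorm_eq_integral_rpow_norm (by simpa using hk) (ENNReal.natCast_ne_top k),
    ENNReal.toReal_ofReal (by positivity)]
  simp [mnorm, Real.norm_eq_abs]

theorem mnorm_le_mnorm_of_le [IsProbabilityMeasure μ] {m : ℕ} (hm : m ≠ 0) (hmk : m ≤ k)
    (hX : MemLp X k μ) : mnorm μ X m ≤ mnorm μ X k := by
  have hmk' : (m : ℝ≥0∞) ≤ k := by exact_mod_cast hmk
  rw [mnorm_eq_toReal_eLpNorm hm (hX.mono_exponent hmk'), mnorm_eq_toReal_eLpNorm (by omega) hX]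
  exact ENNReal.toReal_mono hX.eLpNorm_ne_top (eLpNorm_le_eLpNorm_of_exponent_le hmk' hX.1)

theorem mnorm_le_add_mul_mnorm_of_abs_le [IsProbabilityMeasure μ] {c d : ℝ} (hc : 0 ≤ c)
    (hd : 0 ≤ d) (hk : k ≠ 0) (hX : MemLp X k μ) (hY : MemLp Y k μ)
    (h : ∀ ω, |Y ω| ≤ c + d * |X ω|) :
    mnorm μ Y k ≤ c + d * mnorm μ X k := by
  rw [mnorm_eq_toReal_eLpNorm hk hY, mnorm_eq_toReal_eLpNorm hk hX]
  refine ENNReal.toReal_le_of_le_ofReal (by positivity) ?_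
  rw [ENNReal.ofReal_add hc (by positivity), ENNReal.ofReal_mul hd,
    ENNReal.ofReal_toReal hX.eLpNorm_ne_top]
  exact eLpNorm_le_add_mul_eLpNorm_of_abs_le hc hd hX.1
    (by exact_mod_cast Nat.one_le_iff_ne_zero.2 hk) h

theorem half_mul_mnorm_le_mnorm {d : ℝ} (hd : 0 ≤ d) (hk : k ≠ 0) (hX : MemLp X k μ)
    (hY : MemLp Y k μ) (hsym : μ.map X = μ.map (fun ω => -X ω))
    (h : (∀ ω, 0 ≤ X ω → d * |X ω| ≤ |Y ω|) ∨ (∀ ω, X ω ≤ 0 → d * |X ω| ≤ |Y ω|)) :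
    d / 2 * mnorm μ X k ≤ mnorm μ Y k := by
  have hp : (1 : ℝ≥0∞) ≤ k := by exact_mod_cast Nat.one_le_iff_ne_zero.2 hk
  have hle := h.elim (ofReal_half_mul_eLpNorm_le_of_nonneg hd hX.1.aemeasurable hsym hp)
    (ofReal_half_mul_eLpNorm_le_of_nonpos hd hX.1.aemeasurable hsym hp)
  rw [mnorm_eq_toReal_eLpNorm hk hY, mnorm_eq_toReal_eLpNorm hk hX]
  calc d / 2 * (eLpNorm X k μ).toReal = (ENNReal.ofReal (d / 2) * eLpNorm X k μ).toReal := by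
        rw [ENNReal.toReal_mul, ENNReal.toReal_ofReal (by positivity)]
    _ ≤ (eLpNorm Y k μ).toReal := ENNReal.toReal_mono hY.eLpNorm_ne_top hle

end mnorm

/-- If `φ` satisfies the extended envelope property, then for any symmetric random
variable `X` with all moments finite and positive, `‖φ(X)‖_k ≍ ‖X‖_k`. -/
theorem envelope_moment_equiv {Ω : Type*} [MeasurableSpace Ω] (μ : Measure Ω)
    [IsProbabilityMeasure μ] (X : Ω → ℝ) (hX : Measurable X)
    (hsym : μ.map X = μ.map (fun ω => -X ω))
    (hint : ∀ k : ℕ, 1 ≤ k → Integrable (fun ω => |X ω| ^ k) μ)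
    (hpos : ∀ k : ℕ, 1 ≤ k → 0 < mnorm μ X k)
    (φ : ℝ → ℝ) (hφmeas : Measurable φ)
    (c₁ c₂ d₁ d₂ : ℝ) (hc₁ : 0 ≤ c₁) (hc₂ : 0 ≤ c₂) (hd₁ : 0 < d₁) (hd₂ : 0 < d₂)
    (hlow : (∀ u : ℝ, 0 ≤ u → c₁ + d₁ * |u| ≤ |φ u|) ∨
            (∀ u : ℝ, u ≤ 0 → c₁ + d₁ * |u| ≤ |φ u|))
    (hup : ∀ u : ℝ, |φ u| ≤ c₂ + d₂ * |u|) :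
    ∃ d D : ℝ, 0 < d ∧ 0 < D ∧ ∀ k : ℕ, 1 ≤ k →
      d ≤ mnorm μ (fun ω => φ (X ω)) k / mnorm μ X k ∧
      mnorm μ (fun ω => φ (X ω)) k / mnorm μ X k ≤ D := by
  have hm₁ := hpos 1 le_rfl
  refine ⟨d₁ / 2, c₂ / mnorm μ X 1 + d₂, by positivity, by positivity, fun k hk => ?_⟩
  have hk₀ : k ≠ 0 := by omega
  have hXk : MemLp X k μ := memLp_of_integrable_abs_pow hX.aestronglyMeasurable hk₀ (hint k hk)
  have hYk : MemLp (fun ω => φ (X ω)) k μ :=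
    hXk.of_abs_le_add_mul (hφmeas.comp hX).aestronglyMeasurable fun ω => hup (X ω)
  have hd₁φ : ∀ u, c₁ + d₁ * |u| ≤ |φ u| → d₁ * |u| ≤ |φ u| :=
    fun u => (le_add_of_nonneg_left hc₁).trans
  have hlower : d₁ / 2 * mnorm μ X k ≤ mnorm μ (fun ω => φ (X ω)) k :=
    half_mul_mnorm_le_mnorm hd₁.le hk₀ hXk hYk hsym <| hlow.imp
      (fun h ω hω => hd₁φ _ (h _ hω)) (fun h ω hω => hd₁φ _ (h _ hω))
  have hupper : mnorm μ (fun ω => φ (X ω)) k ≤ c₂ + d₂ * mnorm μ X k :=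
    mnorm_le_add_mul_mnorm_of_abs_le hc₂ hd₂.le hk₀ hXk hYk fun ω => hup (X ω)
  have hmono : mnorm μ X 1 ≤ mnorm μ X k := mnorm_le_mnorm_of_le one_ne_zero hk hXk
  have hmk := hpos k hk
  refine ⟨(le_div_iff₀ hmk).2 hlower, (div_le_iff₀ hmk).2 ?_⟩
  calc mnorm μ (fun ω => φ (X ω)) k ≤ c₂ + d₂ * mnorm μ X k := hupper
    _ ≤ c₂ / mnorm μ X 1 * mnorm μ X k + d₂ * mnorm μ X k := by
        gcongr
        rw [div_mul_eq_mul_div, le_div_iff₀ hm₁]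
        gcongr
    _ = (c₂ / mnorm μ X 1 + d₂) * mnorm μ X k := by ring
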